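/- If a finite bounded poset P admits a recursive atom ordering, then P admits a CC-labeling with the unique earliest (UE) property; in particular P is CC-shellable. -/

import Mathlib

/-- `l` is a saturated chain from `x` to `y` in the poset `α`:
a list `x = x₀ ⋖ x₁ ⋖ ⋯ ⋖ x_k = y` of elements, each covered by the next. -/
def SatChain {α : Type*} [PartialOrder α] (x y : α) (l : List α) : Prop :=
  l.Chain' (· ⋖ ·) ∧ l.head? = some x ∧ l.getLast? = some y

/-- A chain-atom ordering of a bounded poset `α`: for each `u : α` and each root `r`
(a saturated chain from `⊥` to `u`, recorded as a list ending in `u`), a strict linear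
order on the atoms of the rooted interval `[u, ⊤]_r`, i.e. on the elements covering `u`.
The relation is recorded for all pairs `(u, r)`; only genuine roots are relevant. -/
structure ChainAtomOrdering (α : Type*) [PartialOrder α] where
  lt : α → List α → α → α → Prop
  irrefl : ∀ u r a, ¬ lt u r a a
  trans : ∀ u r a b c, lt u r a b → lt u r b c → lt u r a c
  total : ∀ u r a b, u ⋖ a → u ⋖ b → a ≠ b → lt u r a b ∨ lt u r b a

/-- `a` is the first atom of the rooted interval `[u,v]_r` in the chain-atom ordering `S`. -/
def ChainAtomOrdering.IsFirstAtom {α : Type*} [PartialOrder α] (S : ChainAtomOrdering α)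
    (u v : α) (r : List α) (a : α) : Prop :=
  u ⋖ a ∧ a ≤ v ∧ ∀ b, u ⋖ b → b ≤ v → b ≠ a → S.lt u r a b

/-- `IsGRAO S u v r`: the restriction of the chain-atom ordering `S` to the rooted
interval `[u,v]_r` is a generalized recursive atom ordering (GRAO) of `[u,v]`.
Either `[u,v]` has length 1, or: (i)(a) for each atom `a` of `[u,v]_r` the restriction
to `[a,v]_{r·a}` is a GRAO; (i)(b) for each atom `a` and each `a ⋖ x ⋖ w ≤ v`, either
the first atom of `[a,w]_{r·a}` lies above some atom of `[u,v]_r` earlier than `a`, or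
no atom of `[a,w]_{r·a}` does; (ii) if atoms `ai, aj` of `[u,v]_r` with `ai` earlier
than `aj` lie below a common `y ≤ v`, then some `z` with `aj ⋖ z ≤ y` lies above an
atom of `[u,v]_r` earlier than `aj`. -/
inductive IsGRAO {α : Type*} [PartialOrder α] (S : ChainAtomOrdering α) :
    α → α → List α → Prop
  | base (u v : α) (r : List α) (h : u ⋖ v) : IsGRAO S u v r
  | step (u v : α) (r : List α)
      (ia : ∀ a, u ⋖ a → a ≤ v → IsGRAO S a v (r ++ [a]))
      (ib : ∀ a x w, u ⋖ a → a ≤ v → a ⋖ x → x ⋖ w → w ≤ v →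
        (∃ b, S.IsFirstAtom a w (r ++ [a]) b ∧
          ∃ a', u ⋖ a' ∧ a' ≤ v ∧ S.lt u r a' a ∧ a' < b) ∨
        (∀ b a', a ⋖ b → b ≤ w → u ⋖ a' → a' ≤ v → S.lt u r a' a → ¬ a' < b))
      (ii : ∀ ai aj y, u ⋖ ai → ai ≤ v → u ⋖ aj → aj ≤ v → S.lt u r ai aj →
        ai < y → aj < y → y ≤ v →
        ∃ ak z, u ⋖ ak ∧ ak ≤ v ∧ S.lt u r ak aj ∧ aj ⋖ z ∧ z ≤ y ∧ ak < z) :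
      IsGRAO S u v r

/-- `IsRAO S u v r`: the restriction of the chain-atom ordering `S` to the rooted
interval `[u,v]_r` is a recursive atom ordering (RAO) of `[u,v]`.  It differs from a
GRAO only in condition (i)(b): for each atom `a` of `[u,v]_r`, every atom of
`[a,v]_{r·a}` lying above some atom of `[u,v]_r` earlier than `a` must precede every
atom of `[a,v]_{r·a}` lying above no such atom. -/
inductive IsRAO {α : Type*} [PartialOrder α] (S : ChainAtomOrdering α) :
    α → α → List α → Prop
  | base (u v : α) (r : List α) (h : u ⋖ v) : IsRAO S u v r
  | step (u v : α) (r : List α)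
      (ia : ∀ a, u ⋖ a → a ≤ v → IsRAO S a v (r ++ [a]))
      (ib : ∀ a b c, u ⋖ a → a ≤ v → a ⋖ b → b ≤ v → a ⋖ c → c ≤ v →
        (∃ a', u ⋖ a' ∧ a' ≤ v ∧ S.lt u r a' a ∧ a' < b) →
        (∀ a', u ⋖ a' → a' ≤ v → S.lt u r a' a → ¬ a' < c) →
        S.lt a (r ++ [a]) b c)
      (ii : ∀ ai aj y, u ⋖ ai → ai ≤ v → u ⋖ aj → aj ≤ v → S.lt u r ai aj →
        ai < y → aj < y → y ≤ v →
        ∃ ak z, u ⋖ ak ∧ ak ≤ v ∧ S.lt u r ak aj ∧ aj ⋖ z ∧ z ≤ y ∧ ak < z) :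
      IsRAO S u v r

/-- The label sequence of a saturated chain, read from bottom to top.  Here
`lab r x y` is the label of the cover relation `x ⋖ y` with respect to the root `r`
(a saturated chain from `⊥` to `x` recorded as a list ending in `x`); this encodes a
chain-edge (CE-) labeling.  The first list argument is the root of the head of the
chain, the second is the chain itself. -/
def labelSeq {α Q : Type*} (lab : List α → α → α → Q) : List α → List α → List Q
  | _, [] => []
  | _, [_] => []
  | r, x :: y :: c => lab r x y :: labelSeq lab (r ++ [y]) (y :: c)

/-- `u ⋖ v ⋖ w` is a topological ascent with respect to the root `r`: the label
sequence of `u ⋖ v ⋖ w` is lexicographically strictly smaller than that of every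
other saturated chain from `u` to `w`. -/
def TopAscent {α Q : Type*} [PartialOrder α] [LinearOrder Q]
    (lab : List α → α → α → Q) (r : List α) (u v w : α) : Prop :=
  u ⋖ v ∧ v ⋖ w ∧ ∀ c, SatChain u w c → c ≠ [u, v, w] →
    List.Lex (· < ·) (labelSeq lab r [u, v, w]) (labelSeq lab r c)

/-- The saturated chain (second argument) is topologically ascending with respect to
the root given as first argument: every consecutive triple on it is a topological
ascent (with respect to the appropriately extended root). -/
def TopAscending {α Q : Type*} [PartialOrder α] [LinearOrder Q]
    (lab : List α → α → α → Q) : List α → List α → Prop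
  | r, u :: v :: w :: c => TopAscent lab r u v w ∧ TopAscending lab (r ++ [v]) (v :: w :: c)
  | _, _ => True

/-- `lab` is a CC-labeling: every rooted interval `[u,v]_r` has exactly one
topologically ascending saturated chain, distinct saturated chains of `[u,v]_r` have
distinct label sequences, and no label sequence is a prefix of another. -/
def IsCCLabeling {α Q : Type*} [PartialOrder α] [OrderBot α] [LinearOrder Q]
    (lab : List α → α → α → Q) : Prop :=
  ∀ u v r, SatChain (⊥ : α) u r → u ≤ v →
    (∃! c, SatChain u v c ∧ TopAscending lab r c) ∧
    (∀ c c', SatChain u v c → SatChain u v c' → c ≠ c' →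
      labelSeq lab r c ≠ labelSeq lab r c' ∧
      ¬ labelSeq lab r c <+: labelSeq lab r c')

/-- `lab` is a CL-labeling: every rooted interval `[u,v]_r` has exactly one saturated
chain with strictly increasing label sequence, and this label sequence is
lexicographically strictly smaller than that of every other saturated chain. -/
def IsCLLabeling {α Q : Type*} [PartialOrder α] [OrderBot α] [LinearOrder Q]
    (lab : List α → α → α → Q) : Prop :=
  ∀ u v r, SatChain (⊥ : α) u r → u ≤ v →
    ∃ c, SatChain u v c ∧ List.Chain' (· < ·) (labelSeq lab r c) ∧
      (∀ c', SatChain u v c' → List.Chain' (· < ·) (labelSeq lab r c') → c' = c) ∧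
      (∀ c', SatChain u v c' → c' ≠ c →
        List.Lex (· < ·) (labelSeq lab r c) (labelSeq lab r c'))

/-- `lab` is a topological CL-labeling: every rooted interval `[u,v]_r` has a unique
saturated chain with lexicographically smallest label sequence, and every other
saturated chain of `[u,v]_r` contains at least one topological descent (i.e. is not
topologically ascending). -/
def IsTopolCLLabeling {α Q : Type*} [PartialOrder α] [OrderBot α] [LinearOrder Q]
    (lab : List α → α → α → Q) : Prop :=
  ∀ u v r, SatChain (⊥ : α) u r → u ≤ v →
    ∃ c, SatChain u v c ∧
      (∀ c', SatChain u v c' → c' ≠ c →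
        List.Lex (· < ·) (labelSeq lab r c) (labelSeq lab r c')) ∧
      (∀ c', SatChain u v c' → c' ≠ c → ¬ TopAscending lab r c')

/-- `lab` has the unique earliest (UE) property: in each rooted interval `[u,v]_r`,
the smallest label on the cover relations upward from `u` occurs on only one such
cover relation. -/
def HasUE {α Q : Type*} [PartialOrder α] [OrderBot α] [LinearOrder Q]
    (lab : List α → α → α → Q) : Prop :=
  ∀ u v r, SatChain (⊥ : α) u r → u ≤ v →
    ∀ a b, u ⋖ a → a ≤ v → u ⋖ b → b ≤ v →
      (∀ a', u ⋖ a' → a' ≤ v → lab r u a ≤ lab r u a') →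
      (∀ a', u ⋖ a' → a' ≤ v → lab r u b ≤ lab r u a') → a = b

/-- `lab` is self-consistent: whenever `c₀` is the lexicographically strictly first
saturated chain of a rooted interval `[u,v]_r`, with `a` the atom on `c₀` and
`b ≠ a` another atom of `[u,v]_r`, then for every `v'` above both `a` and `b`, every
saturated chain of `[u,v']_r` through `b` is lexicographically later than every
saturated chain of `[u,v']_r` through `a`. -/
def SelfConsistent {α Q : Type*} [PartialOrder α] [OrderBot α] [LinearOrder Q]
    (lab : List α → α → α → Q) : Prop :=
  ∀ u v r, SatChain (⊥ : α) u r → ∀ c₀, SatChain u v c₀ →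
    (∀ c, SatChain u v c → c ≠ c₀ →
      List.Lex (· < ·) (labelSeq lab r c₀) (labelSeq lab r c)) →
    ∀ a, u ⋖ a → a ∈ c₀ →
    ∀ b, u ⋖ b → b ≤ v → b ≠ a →
    ∀ v', a ≤ v' → b ≤ v' →
    ∀ ca cb, SatChain u v' ca → a ∈ ca → SatChain u v' cb → b ∈ cb →
      List.Lex (· < ·) (labelSeq lab r ca) (labelSeq lab r cb)

/-!
Label the cover `x ⋖ y` (with root `r`) by the position of `y` among the atoms of `[x, ⊤]_r`
in the recursive atom ordering. The labels of the covers going up from one element are then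
distinct, which gives the unique earliest property and makes the label sequences of distinct
saturated chains distinct and prefix-free.

In a rooted interval `[u, v]_r` the greedy chain, which always steps to the first atom, is
topologically ascending: the first step of any other chain from `u` to `w` has a larger label.
Conversely let `u ⋖ a ⋖ w ⋯` be topologically ascending. By induction its tail is greedy, so
`w` is the first atom of `[a, v]`, and the ascent at `u ⋖ a ⋖ w` forbids any atom earlier than
`a` below `w`. If an atom earlier than `a` existed, condition (ii) would give `a ⋖ z ≤ v` with
`z` above an atom earlier than `a`, and condition (i)(b) would put `z` before `w`. So the
topologically ascending chain is unique.
-/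

theorem List.Lex.head_le {Q : Type*} [LinearOrder Q] {x y : Q} {l l' : List Q}
    (h : List.Lex (· < ·) (x :: l) (y :: l')) : x ≤ y := by
  cases h with
  | rel h => exact h.le
  | cons _ => exact le_rfl

section SatChain

variable {α : Type*} [PartialOrder α] {u v w x y : α} {c t : List α}

theorem SatChain.exists_eq_cons (h : SatChain u v c) : ∃ t, c = u :: t := by
  obtain ⟨-, hhead, -⟩ := h
  cases c with
  | nil => simp at hhead
  | cons x t => exact ⟨t, by simpa using hhead⟩

theorem satChain_singleton_iff : SatChain u v [x] ↔ x = u ∧ x = v := by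
  refine ⟨fun ⟨_, hu, hv⟩ => ⟨by simpa using hu, by simpa using hv⟩, ?_⟩
  rintro ⟨rfl, rfl⟩
  exact ⟨List.isChain_singleton x, rfl, rfl⟩

theorem satChain_cons_cons_iff :
    SatChain u v (x :: y :: t) ↔ x = u ∧ x ⋖ y ∧ SatChain y v (y :: t) := by
  simp only [SatChain, List.head?_cons, Option.some.injEq, List.getLast?_cons_cons, true_and]
  refine ⟨fun ⟨hc, hx, hv⟩ => ?_, fun ⟨hx, hxy, hc, hv⟩ => ?_⟩
  · obtain ⟨hxy, hc⟩ := List.isChain_cons_cons.1 hc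
    exact ⟨hx, hxy, hc, hv⟩
  · exact ⟨List.isChain_cons_cons.2 ⟨hxy, hc⟩, hx, hv⟩

theorem SatChain.le_of_mem : ∀ {u x : α} {c : List α}, SatChain u v c → x ∈ c → x ≤ v
  | _, _, [], _, hx => absurd hx List.not_mem_nil
  | _, _, [_], h, hx => by
    obtain ⟨-, rfl⟩ := satChain_singleton_iff.1 h
    rw [List.mem_singleton.1 hx]
  | _, _, _ :: y :: _, h, hx => by
    obtain ⟨-, hcov, htail⟩ := satChain_cons_cons_iff.1 h
    obtain rfl | hx := List.mem_cons.1 hx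
    · exact hcov.le.trans (htail.le_of_mem (x := y) List.mem_cons_self)
    · exact htail.le_of_mem hx

theorem SatChain.eq_pair_of_covBy (huw : u ⋖ w) (h : SatChain u w c) : c = [u, w] := by
  obtain ⟨t, rfl⟩ := h.exists_eq_cons
  match t, h with
  | [], h => exact absurd (satChain_singleton_iff.1 h).2 huw.ne
  | y :: s, h =>
    obtain ⟨-, huy, htail⟩ := satChain_cons_cons_iff.1 h
    obtain rfl : y = w := (htail.le_of_mem List.mem_cons_self).eq_of_not_lt (huw.2 huy.lt)
    match s, htail with
    | [], _ => rfl
    | z :: _, htail =>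
      obtain ⟨-, hyz, hz⟩ := satChain_cons_cons_iff.1 htail
      exact absurd (hz.le_of_mem List.mem_cons_self) hyz.lt.not_ge

theorem SatChain.eq_of_labelSeq_prefix {Q : Type*} {lab : List α → α → α → Q}
    (hlab : ∀ r x a b, x ⋖ a → x ⋖ b → lab r x a = lab r x b → a = b) :
    ∀ {r : List α} {u : α} {c c' : List α}, SatChain u v c → SatChain u v c' →
      labelSeq lab r c <+: labelSeq lab r c' → c = c'
  | _, _, [], _, h, _, _ => by simpa using h.exists_eq_cons
  | _, u, [_], c', h, h', _ => by
    obtain ⟨rfl, rfl⟩ := satChain_singleton_iff.1 h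
    obtain ⟨t', rfl⟩ := h'.exists_eq_cons
    match t', h' with
    | [], _ => rfl
    | y :: _, h' =>
      obtain ⟨-, huy, hy⟩ := satChain_cons_cons_iff.1 h'
      exact absurd (hy.le_of_mem List.mem_cons_self) huy.lt.not_ge
  | r, _, x :: y :: s, c', h, h', hpre => by
    obtain ⟨rfl, huy, hy⟩ := satChain_cons_cons_iff.1 h
    obtain ⟨t', rfl⟩ := h'.exists_eq_cons
    match t', h', hpre with
    | [], _, hpre => simp [labelSeq] at hpre
    | y' :: s', h', hpre =>
      obtain ⟨-, huy', hy'⟩ := satChain_cons_cons_iff.1 h'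
      obtain ⟨hlabel, htail⟩ := List.cons_prefix_cons.1 hpre
      obtain rfl := hlab r x y y' huy huy' hlabel
      rw [hy.eq_of_labelSeq_prefix hlab hy' htail]

end SatChain

section IsRAO

variable {α : Type*} [PartialOrder α] {S : ChainAtomOrdering α} {u v w a : α} {r : List α}

theorem isRAO_refl (S : ChainAtomOrdering α) (u : α) (r : List α) : IsRAO S u u r :=
  .step u u r (fun _ ha hau => absurd ha.lt hau.not_gt)
    (fun _ _ _ ha hau => absurd ha.lt hau.not_gt)
    (fun _ _ _ hai haiu => absurd hai.lt haiu.not_gt)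

theorem IsRAO.of_covBy (h : IsRAO S u v r) (ha : u ⋖ a) (hav : a ≤ v) :
    IsRAO S a v (r ++ [a]) := by
  cases h with
  | base _ _ _ huv =>
    obtain rfl := hav.eq_of_not_lt (huv.2 ha.lt)
    exact isRAO_refl S a _
  | step _ _ _ ia _ _ => exact ia a ha hav

theorem IsRAO.restrict (h : IsRAO S u w r) (huv : u ≤ v) (hvw : v ≤ w) : IsRAO S u v r := by
  induction h generalizing v with
  | base u w r huw =>
    obtain rfl | huv := huv.eq_or_lt
    · exact isRAO_refl S u r
    · obtain rfl := hvw.eq_of_not_lt (huw.2 huv)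
      exact .base u v r huw
  | step u w r _ ib ii ih =>
    refine .step u v r (fun a ha hav => ih a ha (hav.trans hvw) hav hvw) ?_ ?_
    · rintro a b c ha hav hab hbv hac hcv ⟨a', ha', ha'v, ha'a, ha'b⟩ hearlier
      exact ib a b c ha (hav.trans hvw) hab (hbv.trans hvw) hac (hcv.trans hvw)
        ⟨a', ha', ha'v.trans hvw, ha'a, ha'b⟩
        fun a' ha' _ ha'a ha'c => hearlier a' ha' (ha'c.le.trans hcv) ha'a ha'c
    · intro ai aj y hai haiv haj hajv hij haiy hajy hyv
      obtain ⟨ak, z, hak, -, hkj, hjz, hzy, hkz⟩ := ii ai aj y hai (haiv.trans hvw) haj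
        (hajv.trans hvw) hij haiy hajy (hyv.trans hvw)
      exact ⟨ak, z, hak, hkz.le.trans (hzy.trans hyv), hkj, hjz, hzy, hkz⟩

theorem IsRAO.of_satChain :
    ∀ {u : α} {r t : List α}, IsRAO S u v r → SatChain u w (u :: t) → w ≤ v →
      IsRAO S w v (r ++ t)
  | _, r, [], h, hc, _ => by
    obtain ⟨-, rfl⟩ := satChain_singleton_iff.1 hc
    simpa using h
  | _, r, a :: t, h, hc, hwv => by
    obtain ⟨-, hua, hc⟩ := satChain_cons_cons_iff.1 hc
    simpa using (h.of_covBy hua ((hc.le_of_mem List.mem_cons_self).trans hwv)).of_satChain hc hwv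

theorem IsRAO.of_root [BoundedOrder α] (h : IsRAO S ⊥ ⊤ [⊥]) (hr : SatChain ⊥ u r)
    (huv : u ≤ v) : IsRAO S u v r := by
  obtain ⟨t, rfl⟩ := hr.exists_eq_cons
  exact (h.of_satChain hr le_top).restrict huv le_top

end IsRAO

namespace ChainAtomOrdering

variable {α : Type*} [PartialOrder α] (S : ChainAtomOrdering α)

noncomputable def rankLabel (r : List α) (x y : α) : ℕ :=
  {b | x ⋖ b ∧ S.lt x r b y}.ncard

inductive IsGreedyChain : List α → α → α → List α → Prop
  | nil (r : List α) (u : α) : IsGreedyChain r u u [u]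
  | cons (r : List α) (u v a : α) (t : List α) (ha : S.IsFirstAtom u v r a)
      (ht : IsGreedyChain (r ++ [a]) a v (a :: t)) : IsGreedyChain r u v (u :: a :: t)

variable {S} {u v w a b x : α} {r : List α} {c c' : List α}

theorem rankLabel_lt_rankLabel [Finite α] (ha : x ⋖ a) (hab : S.lt x r a b) :
    S.rankLabel r x a < S.rankLabel r x b := by
  refine Set.ncard_lt_ncard ⟨fun c hc => ⟨hc.1, S.trans _ _ _ _ _ hc.2 hab⟩, fun hsub => ?_⟩
    (Set.toFinite _)
  exact S.irrefl x r a (hsub ⟨ha, hab⟩).2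

theorem rankLabel_lt_rankLabel_iff [Finite α] (ha : x ⋖ a) (hb : x ⋖ b) :
    S.rankLabel r x a < S.rankLabel r x b ↔ S.lt x r a b := by
  refine ⟨fun hlt => ?_, rankLabel_lt_rankLabel ha⟩
  rcases eq_or_ne a b with rfl | hne
  · exact absurd hlt (lt_irrefl _)
  · exact (S.total x r a b ha hb hne).resolve_right
      fun hba => (rankLabel_lt_rankLabel hb hba).not_gt hlt

theorem rankLabel_inj [Finite α] (ha : x ⋖ a) (hb : x ⋖ b) :
    S.rankLabel r x a = S.rankLabel r x b ↔ a = b := by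
  refine ⟨fun heq => ?_, fun h => h ▸ rfl⟩
  by_contra hne
  rcases S.total x r a b ha hb hne with hab | hba
  · exact (rankLabel_lt_rankLabel ha hab).ne heq
  · exact (rankLabel_lt_rankLabel hb hba).ne heq.symm

theorem exists_isFirstAtom [Finite α] (S : ChainAtomOrdering α) (r : List α) (huv : u < v) :
    ∃ a, S.IsFirstAtom u v r a := by
  obtain ⟨a, ⟨hua, hav⟩, hmin⟩ := Set.exists_min_image {a | u ⋖ a ∧ a ≤ v}
    (S.rankLabel r u) (Set.toFinite _) (exists_covBy_le_of_lt huv)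
  refine ⟨a, hua, hav, fun b hub hbv hba => ?_⟩
  exact (rankLabel_lt_rankLabel_iff hua hub).1
    ((hmin b ⟨hub, hbv⟩).lt_of_ne fun h => hba ((rankLabel_inj hua hub).1 h).symm)

theorem IsFirstAtom.eq (ha : S.IsFirstAtom u v r a) (hb : S.IsFirstAtom u v r b) : a = b := by
  by_contra hne
  exact S.irrefl u r a (S.trans _ _ _ _ _ (ha.2.2 b hb.1 hb.2.1 (Ne.symm hne))
    (hb.2.2 a ha.1 ha.2.1 hne))

theorem isFirstAtom_of_covBy (huv : u ⋖ v) : S.IsFirstAtom u v r v :=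
  ⟨huv, le_rfl, fun _ hb hbv hne => absurd (hbv.lt_of_ne hne) (huv.2 hb.lt)⟩

theorem IsGreedyChain.satChain (h : S.IsGreedyChain r u v c) : SatChain u v c := by
  induction h with
  | nil r u => exact satChain_singleton_iff.2 ⟨rfl, rfl⟩
  | cons r u v a t ha _ ih => exact satChain_cons_cons_iff.2 ⟨rfl, ha.1, ih⟩

theorem IsGreedyChain.eq (h : S.IsGreedyChain r u v c) (h' : S.IsGreedyChain r u v c') :
    c = c' := by
  induction h generalizing c' with
  | nil r u =>
    cases h' with
    | nil => rfl
    | cons _ _ _ _ _ ha _ => exact absurd ha.1.lt ha.2.1.not_gt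
  | cons r u v a t ha _ ih =>
    cases h' with
    | nil => exact absurd ha.1.lt ha.2.1.not_gt
    | cons _ _ _ a' t' ha' ht' =>
      obtain rfl := ha.eq ha'
      rw [ih ht']

theorem exists_isGreedyChain [Finite α] (S : ChainAtomOrdering α) (r : List α) (huv : u ≤ v) :
    ∃ t, S.IsGreedyChain r u v (u :: t) := by
  induction u using WellFoundedGT.induction generalizing r with
  | _ u ih =>
    obtain rfl | huv := huv.eq_or_lt
    · exact ⟨[], .nil r u⟩
    obtain ⟨a, ha⟩ := S.exists_isFirstAtom r huv
    obtain ⟨t, ht⟩ := ih a ha.1.lt (r ++ [a]) ha.2.1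
    exact ⟨a :: t, .cons r u v a t ha ht⟩

theorem topAscent_rankLabel_of_isFirstAtom [Finite α] (ha : S.IsFirstAtom u v r a)
    (haw : a ⋖ w) (hwv : w ≤ v) : TopAscent S.rankLabel r u a w := by
  refine ⟨ha.1, haw, fun d hd hne => ?_⟩
  obtain ⟨t, rfl⟩ := hd.exists_eq_cons
  match t, hd with
  | [], hd => exact absurd (satChain_singleton_iff.1 hd).2 (ha.1.lt.trans haw.lt).ne
  | y :: s, hd =>
    obtain ⟨-, huy, hy⟩ := satChain_cons_cons_iff.1 hd
    obtain rfl | hya := eq_or_ne y a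
    · exact absurd (by rw [hy.eq_pair_of_covBy haw]) hne
    · exact .rel (rankLabel_lt_rankLabel ha.1
        (ha.2.2 y huy ((hd.le_of_mem (by simp)).trans hwv) hya))

theorem IsGreedyChain.topAscending [Finite α] (h : S.IsGreedyChain r u v c) :
    TopAscending S.rankLabel r c := by
  induction h with
  | nil => trivial
  | cons r u v a t ha ht ih =>
    match t, ht, ih with
    | [], _, _ => trivial
    | w :: _, ht, ih =>
      have hw := ht.satChain
      exact ⟨topAscent_rankLabel_of_isFirstAtom ha (satChain_cons_cons_iff.1 hw).2.1
        (hw.le_of_mem (by simp)), ih⟩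

theorem not_lt_of_topAscent_rankLabel [Finite α] (hasc : TopAscent S.rankLabel r u a w)
    {a' : α} (ha' : u ⋖ a') (ha'a : S.lt u r a' a) : ¬ a' < w := by
  intro ha'w
  obtain ⟨t, ht⟩ := S.exists_isGreedyChain [] ha'w.le
  have hne : u :: a' :: t ≠ [u, a, w] := by
    rintro ⟨⟩
    exact S.irrefl u r a ha'a
  have hlex := hasc.2.2 _ (satChain_cons_cons_iff.2 ⟨rfl, ha', ht.satChain⟩) hne
  exact (rankLabel_lt_rankLabel ha' ha'a).not_ge hlex.head_le

theorem _root_.IsRAO.isFirstAtom_of_topAscent [Finite α] (hR : IsRAO S u v r)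
    (hasc : TopAscent S.rankLabel r u a w) (hw : S.IsFirstAtom a v (r ++ [a]) w) :
    S.IsFirstAtom u v r a := by
  have hav : a < v := hasc.2.1.lt.trans_le hw.2.1
  obtain ⟨_, _, _, huv⟩ | ⟨_, _, _, _, ib, ii⟩ := hR
  · exact absurd hav (huv.2 hasc.1.lt)
  refine ⟨hasc.1, hav.le, fun b hub hbv hba => ?_⟩
  by_contra hab
  have hba : S.lt u r b a := (S.total u r b a hub hasc.1 hba).resolve_right hab
  have hbv : b < v := hbv.lt_of_ne fun h => (h ▸ hub).2 hasc.1.lt hav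
  obtain ⟨ak, z, hak, hakv, hka, haz, hzv, hkz⟩ :=
    ii b a v hub hbv.le hasc.1 hav.le hba hbv hav le_rfl
  have hzw : S.lt a (r ++ [a]) z w := ib a z w hasc.1 hav.le haz hzv hasc.2.1 hw.2.1
    ⟨ak, hak, hakv, hka, hkz⟩ fun a' ha' _ ha'a => not_lt_of_topAscent_rankLabel hasc ha' ha'a
  have hwz : S.lt a (r ++ [a]) w z := hw.2.2 z haz hzv fun h => S.irrefl _ _ _ (h ▸ hzw)
  exact S.irrefl _ _ _ (S.trans _ _ _ _ _ hzw hwz)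

theorem _root_.IsRAO.isGreedyChain_of_topAscending [Finite α] :
    ∀ {u : α} {r c : List α}, IsRAO S u v r → SatChain u v c →
      TopAscending S.rankLabel r c → S.IsGreedyChain r u v c
  | _, _, [], _, hc, _ => by simpa using hc.exists_eq_cons
  | _, r, [_], _, hc, _ => by
    obtain ⟨rfl, rfl⟩ := satChain_singleton_iff.1 hc
    exact .nil r _
  | _, r, [_, _], _, hc, _ => by
    obtain ⟨rfl, hua, ha⟩ := satChain_cons_cons_iff.1 hc
    obtain ⟨-, rfl⟩ := satChain_singleton_iff.1 ha
    exact .cons r _ _ _ [] (isFirstAtom_of_covBy hua) (.nil _ _)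
  | _, r, _ :: a :: w :: t, hR, hc, hasc => by
    obtain ⟨rfl, hua, ha⟩ := satChain_cons_cons_iff.1 hc
    have hav : a ≤ v := ha.le_of_mem List.mem_cons_self
    have hgr := (hR.of_covBy hua hav).isGreedyChain_of_topAscending ha hasc.2
    have hw : S.IsFirstAtom a v (r ++ [a]) w := by
      cases hgr with
      | cons _ _ _ _ _ hw _ => exact hw
    exact .cons r _ v a (w :: t) (hR.isFirstAtom_of_topAscent hasc.1 hw) hgr

end ChainAtomOrdering

open ChainAtomOrdering

/-- If a finite bounded poset admits a recursive atom ordering, then it admits a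
CC-labeling with the unique earliest (UE) property; in particular it is CC-shellable. -/
theorem stmt_11 {α : Type*} [PartialOrder α] [BoundedOrder α] [Fintype α]
    (h : ∃ S : ChainAtomOrdering α, IsRAO S ⊥ ⊤ [⊥]) :
    ∃ (Q : Type) (_ : LinearOrder Q) (lab : List α → α → α → Q),
      IsCCLabeling lab ∧ HasUE lab := by
  obtain ⟨S, hS⟩ := h
  have hinj : ∀ r x a b, x ⋖ a → x ⋖ b →
      S.rankLabel r x a = S.rankLabel r x b → a = b :=
    fun _ _ _ _ ha hb => (rankLabel_inj ha hb).1
  refine ⟨ℕ, inferInstance, S.rankLabel, fun u v r hr huv => ⟨?_, ?_⟩, ?_⟩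
  · obtain ⟨t, ht⟩ := S.exists_isGreedyChain r huv
    refine ⟨u :: t, ⟨ht.satChain, ht.topAscending⟩, fun c ⟨hc, hasc⟩ => ?_⟩
    exact ((hS.of_root hr huv).isGreedyChain_of_topAscending hc hasc).eq ht
  · intro c c' hc hc' hne
    exact ⟨fun heq => hne (hc.eq_of_labelSeq_prefix hinj hc' (by rw [heq])),
      fun hpre => hne (hc.eq_of_labelSeq_prefix hinj hc' hpre)⟩
  · intro u v r _ _ a b ha hav hb hbv hmina hminb
    exact hinj r u a b ha hb ((hmina b hb hbv).antisymm (hminb a ha hav))
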